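/- arXiv:1701.08070 — 4 statements merged into one kernel-verified Lean document; each statement's English description precedes it below -/
import Mathlib

section
/- Let x(α) = a cos^m α + b_x sin^n α and y(α) = b_y sin α with m, n odd positive integers. Then the signed area S = (1/2)∮₀^{2π} [x y′ − y x′] dα equals π a b_y · (1/2^m) · (2m·C(m−1,(m−1)/2) − ((m−1)/2)·C(m+1,(m+1)/2)). -/
open Real intervalIntegral

lemma sinPowPer (k : ℕ) : Function.Periodic (fun x : ℝ => Real.sin x ^ (2 * k)) π := by
  intro x
  simp only [Real.sin_add_pi]
  rw [pow_mul, pow_mul, neg_sq]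

lemma cosPowPer (k : ℕ) : Function.Periodic (fun x : ℝ => Real.cos x ^ (2 * k)) π := by
  intro x
  simp only [Real.cos_add_pi]
  rw [pow_mul, pow_mul, neg_sq]

lemma prodEq (k : ℕ) :
    (∏ i ∈ Finset.range k, (2 * (i : ℝ) + 1) / (2 * i + 2)) =
      (Nat.choose (2 * k) k : ℝ) / 4 ^ k := by
  induction k with
  | zero => simp
  | succ k ih =>
    rw [Finset.prod_range_succ, ih]
    have h := Nat.succ_mul_centralBinom_succ k
    have h' : ((k : ℝ) + 1) * (Nat.choose (2 * (k + 1)) (k + 1) : ℝ) =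
        2 * (2 * k + 1) * (Nat.choose (2 * k) k : ℝ) := by
      have := congrArg (fun z : ℕ => (z : ℝ)) h
      push_cast [Nat.centralBinom] at this ⊢
      linarith [this]
    have h4 : (4 : ℝ) ^ k ≠ 0 := by positivity
    have hk1 : ((k : ℝ) + 1) ≠ 0 := by positivity
    field_simp
    linear_combination -2 * (4:ℝ) ^ k * h'

lemma cosInt (k : ℕ) :
    (∫ x in (0:ℝ)..(2 * π), Real.cos x ^ (2 * k)) =
      2 * π * (Nat.choose (2 * k) k : ℝ) / 4 ^ k := by
  have hint : ∀ a b : ℝ, IntervalIntegrable (fun x => Real.cos x ^ (2 * k))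
      MeasureTheory.volume a b := fun a b => (by fun_prop : Continuous _).intervalIntegrable a b
  have split : (∫ x in (0:ℝ)..(2 * π), Real.cos x ^ (2 * k)) =
      (∫ x in (0:ℝ)..π, Real.cos x ^ (2 * k)) + ∫ x in π..(2 * π), Real.cos x ^ (2 * k) :=
    (integral_add_adjacent_intervals (hint 0 π) (hint π (2 * π))).symm
  have h2 : (∫ x in π..(2 * π), Real.cos x ^ (2 * k)) =
      ∫ x in (0:ℝ)..π, Real.cos x ^ (2 * k) := by
    have := (cosPowPer k).intervalIntegral_add_eq π 0
    simpa [two_mul] using this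
  have h3 : (∫ x in (0:ℝ)..π, Real.cos x ^ (2 * k)) =
      ∫ x in (0:ℝ)..π, Real.sin x ^ (2 * k) := by
    calc (∫ x in (0:ℝ)..π, Real.cos x ^ (2 * k))
        = ∫ x in (0:ℝ)..π, (fun y => Real.sin y ^ (2 * k)) (x + π / 2) := by
          simp [Real.sin_add_pi_div_two]
      _ = ∫ x in (0 + π / 2)..(π + π / 2), Real.sin x ^ (2 * k) :=
          integral_comp_add_right (fun y => Real.sin y ^ (2 * k)) (π / 2)
      _ = ∫ x in (0:ℝ)..π, Real.sin x ^ (2 * k) := by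
          have := (sinPowPer k).intervalIntegral_add_eq (π / 2) 0
          simpa [add_comm] using this
  rw [split, h2, h3, integral_sin_pow_even, prodEq]
  ring

lemma sinCosInt (l : ℕ) :
    (∫ x in (0:ℝ)..(2 * π), Real.sin x ^ (2 * l + 1) * Real.cos x) = 0 := by
  have h := integral_sin_pow_mul_cos_pow_odd (a := (0:ℝ)) (b := 2 * π) (2 * l + 1) 0
  simpa [Real.sin_two_pi] using h

theorem stmt_10 (m n : ℕ) (hm : Odd m) (hmpos : 0 < m) (hn : Odd n) (hnpos : 0 < n)
    (a bx by' : ℝ)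
    (x y : ℝ → ℝ)
    (hx : x = fun α => a * Real.cos α ^ m + bx * Real.sin α ^ n)
    (hy : y = fun α => by' * Real.sin α) :
    (1 / 2) * ∫ α in (0:ℝ)..(2 * π), (x α * deriv y α - y α * deriv x α) =
      π * a * by' * (1 / 2 ^ m) *
        (2 * m * (Nat.choose (m - 1) ((m - 1) / 2) : ℝ) -
          ((m - 1 : ℕ) / 2 : ℕ) * (Nat.choose (m + 1) ((m + 1) / 2) : ℝ)) := by
  obtain ⟨k, rfl⟩ := hm
  obtain ⟨l, rfl⟩ := hn
  have hdx : deriv x = fun α => a * (((2 * k + 1 : ℕ) : ℝ) * Real.cos α ^ (2 * k) * (-Real.sin α))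
      + bx * (((2 * l + 1 : ℕ) : ℝ) * Real.sin α ^ (2 * l) * Real.cos α) := by
    funext α
    rw [hx]
    exact ((((Real.hasDerivAt_cos α).pow _).const_mul a).add
      (((Real.hasDerivAt_sin α).pow _).const_mul bx)).deriv
  have hdy : deriv y = fun α => by' * Real.cos α := by
    funext α
    rw [hy]
    exact ((Real.hasDerivAt_sin α).const_mul by').deriv
  have key : ∀ α : ℝ, x α * deriv y α - y α * deriv x α =
      (a * by' * (2 * k + 1)) * Real.cos α ^ (2 * k)
      - (a * by' * (2 * k)) * Real.cos α ^ (2 * k + 2)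
      + (-(2 * l : ℝ) * bx * by') * (Real.sin α ^ (2 * l + 1) * Real.cos α) := by
    intro α
    rw [hdx, hdy, hx, hy]
    simp only []
    have hs := Real.sin_sq_add_cos_sq α
    push_cast
    linear_combination (a * by' * (2 * (k:ℝ) + 1) * Real.cos α ^ (2 * k)) * hs
  have hI : (∫ α in (0:ℝ)..(2 * π), (x α * deriv y α - y α * deriv x α)) =
      ∫ α in (0:ℝ)..(2 * π),
        ((a * by' * (2 * k + 1)) * Real.cos α ^ (2 * k)
        - (a * by' * (2 * k)) * Real.cos α ^ (2 * k + 2)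
        + (-(2 * l : ℝ) * bx * by') * (Real.sin α ^ (2 * l + 1) * Real.cos α)) :=
    integral_congr fun α _ => key α
  have cos2 : (∫ α in (0:ℝ)..(2 * π), Real.cos α ^ (2 * k + 2)) =
      2 * π * (Nat.choose (2 * (k + 1)) (k + 1) : ℝ) / 4 ^ (k + 1) := by
    have := cosInt (k + 1)
    rwa [show 2 * (k + 1) = 2 * k + 2 by ring] at this
  rw [hI, integral_add, integral_sub, integral_const_mul, integral_const_mul,
    integral_const_mul, cosInt k, cos2, sinCosInt]
  · have e1 : (2 * k + 1 - 1) = 2 * k := by omega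
    have e2 : (2 * k + 1 - 1) / 2 = k := by omega
    have e3 : (2 * k + 1 + 1) = 2 * (k + 1) := by omega
    have e4 : (2 * k + 1 + 1) / 2 = k + 1 := by omega
    rw [e2, e4, e1, e3]
    have hp : (2 : ℝ) ^ (2 * k + 1) = 2 * 4 ^ k := by
      rw [pow_succ, pow_mul]; norm_num; ring
    rw [hp]
    have h4 : (4 : ℝ) ^ k ≠ 0 := by positivity
    have h4' : (4 : ℝ) ^ (k + 1) = 4 ^ k * 4 := by rw [pow_succ]
    rw [h4']
    push_cast
    field_simp
    ring
  · exact ((by fun_prop : Continuous _).intervalIntegrable _ _)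
  · exact ((by fun_prop : Continuous _).intervalIntegrable _ _)
  · exact ((by fun_prop : Continuous _).intervalIntegrable _ _)
  · exact ((by fun_prop : Continuous _).intervalIntegrable _ _)
end

section
/- For m = n = 3, the area of the loop x̄(α) = a cos³α + b_x sin³α + tanθ(b_x tanκ + b_y)(sin α − sin³α), ȳ(α) = b_y sin α + b_x tanκ (sin α − sin³α) equals S = (3π a/8)(b_x tan κ + 2 b_y); in particular S is independent of θ. -/
/-!
The area form `x dy - y dx` is unchanged by the shear `x ↦ x + t y`, and the loop is such a
shear (with `t = tan θ`) of `(a cos³ α + β sin³ α, B sin α - K sin³ α)`, where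
`β = b_x - b_y tan θ`, `B = b_y + b_x tan κ`, `K = b_x tan κ`. Modulo `sin² + cos² = 1` the area
form of the latter is `a (3 (B - K) cos² α + (3 K - 2 B) cos⁴ α) - 2 β B sin³ α cos α`;
the last term integrates to zero over a period, and `∫ cos² = π`, `∫ cos⁴ = 3π/4`.
-/

open Real intervalIntegral

theorem integral_cos_sq_zero_two_pi : ∫ α in (0 : ℝ)..2 * π, cos α ^ 2 = π := by
  simp

theorem integral_cos_pow_four_zero_two_pi : ∫ α in (0 : ℝ)..2 * π, cos α ^ 4 = 3 * π / 4 := by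
  rw [integral_cos_pow (n := 2)]
  simp
  ring

theorem integral_sin_pow_three_mul_cos_zero_two_pi :
    ∫ α in (0 : ℝ)..2 * π, sin α ^ 3 * cos α = 0 := by
  simpa using integral_sin_pow_mul_cos_pow_odd (a := 0) (b := 2 * π) 3 0

noncomputable def areaForm (x y : ℝ → ℝ) (α : ℝ) : ℝ := x α * deriv y α - y α * deriv x α

theorem areaForm_shear {x y : ℝ → ℝ} (hx : Differentiable ℝ x) (hy : Differentiable ℝ y)
    (t : ℝ) : areaForm (fun α => x α + t * y α) y = areaForm x y := by
  funext α
  simp only [areaForm]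
  rw [deriv_fun_add (hx α) ((hy α).const_mul t), deriv_const_mul t (hy α)]
  ring

theorem areaForm_cos_cube_sin_cube (a β B K : ℝ) :
    areaForm (fun α => a * cos α ^ 3 + β * sin α ^ 3) (fun α => B * sin α - K * sin α ^ 3) =
      fun α => a * (3 * (B - K) * cos α ^ 2 + (3 * K - 2 * B) * cos α ^ 4) -
        2 * β * B * (sin α ^ 3 * cos α) := by
  funext α
  have hs := hasDerivAt_sin α
  have hc := hasDerivAt_cos α
  have hx : HasDerivAt (fun α => a * cos α ^ 3 + β * sin α ^ 3)
      (-3 * a * cos α ^ 2 * sin α + 3 * β * sin α ^ 2 * cos α) α := by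
    refine (((hc.fun_pow 3).const_mul a).fun_add ((hs.fun_pow 3).const_mul β)).congr_deriv ?_
    norm_num; ring
  have hy : HasDerivAt (fun α => B * sin α - K * sin α ^ 3)
      (B * cos α - 3 * K * sin α ^ 2 * cos α) α := by
    refine ((hs.const_mul B).fun_sub ((hs.fun_pow 3).const_mul K)).congr_deriv ?_
    norm_num; ring
  rw [areaForm, hx.deriv, hy.deriv]
  linear_combination a * (3 * (B - K) * cos α ^ 2 - 3 * K * sin α ^ 2 * cos α ^ 2) *
    sin_sq_add_cos_sq α

theorem integral_areaForm_cos_cube_sin_cube (a β B K : ℝ) :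
    (1 / 2) * ∫ α in (0 : ℝ)..2 * π,
      areaForm (fun α => a * cos α ^ 3 + β * sin α ^ 3) (fun α => B * sin α - K * sin α ^ 3) α =
      3 * π * a / 8 * (2 * B - K) := by
  rw [areaForm_cos_cube_sin_cube, integral_sub, integral_const_mul, integral_add,
    integral_const_mul, integral_const_mul, integral_const_mul, integral_cos_sq_zero_two_pi,
    integral_cos_pow_four_zero_two_pi, integral_sin_pow_three_mul_cos_zero_two_pi]
  · ring
  all_goals apply Continuous.intervalIntegrable; fun_prop

theorem stmt_12_general (a bx by' θ κ : ℝ)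
    (x y : ℝ → ℝ)
    (hx : x = fun α => a * Real.cos α ^ 3 + bx * Real.sin α ^ 3 +
        Real.tan θ * (bx * Real.tan κ + by') * (Real.sin α - Real.sin α ^ 3))
    (hy : y = fun α => by' * Real.sin α + bx * Real.tan κ * (Real.sin α - Real.sin α ^ 3)) :
    (1 / 2) * ∫ α in (0:ℝ)..(2 * π), (x α * deriv y α - y α * deriv x α) =
      3 * π * a / 8 * (bx * Real.tan κ + 2 * by') := by
  have hy' : y = fun α => (by' + bx * tan κ) * sin α - bx * tan κ * sin α ^ 3 := by
    rw [hy]; funext α; ring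
  have hx' : x = fun α => (a * cos α ^ 3 + (bx - tan θ * by') * sin α ^ 3) + tan θ * y α := by
    rw [hx, hy]; funext α; ring
  change (1 / 2) * ∫ α in (0:ℝ)..(2 * π), areaForm x y α = _
  rw [hx', areaForm_shear (by fun_prop) (by rw [hy']; fun_prop), hy',
    integral_areaForm_cos_cube_sin_cube]
  ring

theorem stmt_12 (a bx by' θ κ : ℝ)
    (hθ : θ ∈ Set.Ioo (-(π / 2)) (π / 2)) (hκ : κ ∈ Set.Ioo (-(π / 2)) (π / 2))
    (x y : ℝ → ℝ)
    (hx : x = fun α => a * Real.cos α ^ 3 + bx * Real.sin α ^ 3 +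
        Real.tan θ * (bx * Real.tan κ + by') * (Real.sin α - Real.sin α ^ 3))
    (hy : y = fun α => by' * Real.sin α + bx * Real.tan κ * (Real.sin α - Real.sin α ^ 3)) :
    (1 / 2) * ∫ α in (0:ℝ)..(2 * π), (x α * deriv y α - y α * deriv x α) =
      3 * π * a / 8 * (bx * Real.tan κ + 2 * by') :=
  stmt_12_general a bx by' θ κ x y hx hy
end

section
/- For m = n = 3, the area of the rotated loop x̄(α) = a cos³α + b_x sin α − cosθ(b_x cosθ − b_y sinθ)(sin α − sin³α), ȳ(α) = b_y sin³α + cosθ(b_x sinθ + b_y cosθ)(sin α − sin³α) equals S = (3π a/8)[cosθ(b_x sinθ + b_y cosθ) + b_y]. -/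
/-! Write the loop as `x = a cos³ α + f (sin α)`, `y = g (sin α)` with cubic `f`, `g`.
Integrating by parts around the closed loop turns the area into `-∫ y x'`. Every term of `y x'`
of the form `h (sin α) cos α` integrates to zero (substitute `v = sin α`), leaving
`3a ∫ g (sin α) sin α cos² α`, which the reduction formula
`∫ sin^(n+2) = (n+1)/(n+2) ∫ sin^n` over a full period evaluates. -/

open Real intervalIntegral

theorem half_integral_mul_deriv_sub_mul_deriv_eq_neg {x y x' y' : ℝ → ℝ} {a b : ℝ}
    (hx : ∀ t ∈ Set.uIcc a b, HasDerivAt x (x' t) t)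
    (hy : ∀ t ∈ Set.uIcc a b, HasDerivAt y (y' t) t)
    (hx' : IntervalIntegrable x' MeasureTheory.volume a b)
    (hy' : IntervalIntegrable y' MeasureTheory.volume a b)
    (hclosed : x b * y b = x a * y a) :
    (1 / 2) * ∫ t in a..b, (x t * y' t - y t * x' t) = -∫ t in a..b, y t * x' t := by
  have hxc : ContinuousOn x (Set.uIcc a b) :=
    fun t ht => (hx t ht).continuousAt.continuousWithinAt
  have hyc : ContinuousOn y (Set.uIcc a b) :=
    fun t ht => (hy t ht).continuousAt.continuousWithinAt
  have hparts := integral_mul_deriv_eq_deriv_mul hx hy hx' hy'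
  rw [integral_sub (hy'.continuousOn_mul hxc) (hx'.continuousOn_mul hyc), hparts, hclosed]
  simp only [mul_comm (x' _)]
  ring

theorem integral_comp_sin_mul_cos_eq_zero {a b : ℝ} (hab : sin a = sin b) {g : ℝ → ℝ}
    (hg : Continuous g) : ∫ t in a..b, g (sin t) * cos t = 0 :=
  (integral_comp_mul_deriv (fun t _ => hasDerivAt_sin t) continuousOn_cos hg).trans
    (by rw [hab, integral_same])

theorem integral_sin_pow_add_two_zero_two_pi (n : ℕ) :
    ∫ t in (0:ℝ)..2 * π, sin t ^ (n + 2) =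
      (n + 1) / (n + 2) * ∫ t in (0:ℝ)..2 * π, sin t ^ n := by
  simp [integral_sin_pow]

theorem integral_sin_pow_mul_cos_sq_zero_two_pi (n : ℕ) :
    ∫ t in (0:ℝ)..2 * π, sin t ^ n * cos t ^ 2 =
      (∫ t in (0:ℝ)..2 * π, sin t ^ n) / (n + 2) := by
  have hintegrable (k : ℕ) :
      IntervalIntegrable (fun t => sin t ^ k) MeasureTheory.volume 0 (2 * π) :=
    (continuous_sin.pow k).intervalIntegrable _ _
  calc ∫ t in (0:ℝ)..2 * π, sin t ^ n * cos t ^ 2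
      = ∫ t in (0:ℝ)..2 * π, (sin t ^ n - sin t ^ (n + 2)) := by
        congr 1 with t
        rw [cos_sq']
        ring
    _ = (∫ t in (0:ℝ)..2 * π, sin t ^ n) / (n + 2) := by
        rw [integral_sub (hintegrable n) (hintegrable (n + 2)),
          integral_sin_pow_add_two_zero_two_pi]
        field_simp
        ring

theorem integral_sin_sq_zero_two_pi : ∫ t in (0:ℝ)..2 * π, sin t ^ 2 = π := by
  simp [integral_sin_sq]

theorem integral_sin_pow_four_zero_two_pi : ∫ t in (0:ℝ)..2 * π, sin t ^ 4 = 3 * π / 4 := by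
  rw [integral_sin_pow_add_two_zero_two_pi 2, integral_sin_sq_zero_two_pi]
  norm_num
  ring

theorem area_cos_cube_loop (a p q r u : ℝ) :
    (1 / 2) * ∫ t in (0:ℝ)..2 * π,
      ((a * cos t ^ 3 + p * sin t + q * sin t ^ 3) *
          deriv (fun t => r * sin t + u * sin t ^ 3) t -
        (r * sin t + u * sin t ^ 3) *
          deriv (fun t => a * cos t ^ 3 + p * sin t + q * sin t ^ 3) t) =
      3 * π * a / 8 * (2 * r + u) := by
  have hX (t : ℝ) : HasDerivAt (fun t => a * cos t ^ 3 + p * sin t + q * sin t ^ 3)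
      (-3 * a * cos t ^ 2 * sin t + (p + 3 * q * sin t ^ 2) * cos t) t := by
    refine ((((hasDerivAt_cos t).pow 3).const_mul a).add ((hasDerivAt_sin t).const_mul p) |>.add
      (((hasDerivAt_sin t).pow 3).const_mul q)).congr_deriv ?_
    ring
  have hY (t : ℝ) : HasDerivAt (fun t => r * sin t + u * sin t ^ 3)
      ((r + 3 * u * sin t ^ 2) * cos t) t := by
    refine (((hasDerivAt_sin t).const_mul r).add
      (((hasDerivAt_sin t).pow 3).const_mul u)).congr_deriv ?_
    ring
  rw [funext fun t => (hX t).deriv, funext fun t => (hY t).deriv,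
    half_integral_mul_deriv_sub_mul_deriv_eq_neg (fun t _ => hX t) (fun t _ => hY t)
      (Continuous.intervalIntegrable (by fun_prop) _ _)
      (Continuous.intervalIntegrable (by fun_prop) _ _) (by simp)]
  have hintegrable {f : ℝ → ℝ} (hf : Continuous f) :
      IntervalIntegrable f MeasureTheory.volume 0 (2 * π) :=
    hf.intervalIntegrable _ _
  calc -∫ t in (0:ℝ)..2 * π,
          (r * sin t + u * sin t ^ 3) *
            (-3 * a * cos t ^ 2 * sin t + (p + 3 * q * sin t ^ 2) * cos t)
      = ∫ t in (0:ℝ)..2 * π,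
          (3 * a * r * (sin t ^ 2 * cos t ^ 2) + 3 * a * u * (sin t ^ 4 * cos t ^ 2) -
            (fun v => (r * v + u * v ^ 3) * (p + 3 * q * v ^ 2)) (sin t) * cos t) := by
        rw [← integral_neg]
        congr 1 with t
        ring
    _ = 3 * a * r * (π / 4) + 3 * a * u * (π / 8) := by
        rw [integral_sub (hintegrable (by fun_prop)) (hintegrable (by fun_prop)),
          integral_add (hintegrable (by fun_prop)) (hintegrable (by fun_prop)), integral_const_mul,
          integral_const_mul, integral_sin_pow_mul_cos_sq_zero_two_pi,
          integral_sin_pow_mul_cos_sq_zero_two_pi, integral_sin_sq_zero_two_pi,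
          integral_sin_pow_four_zero_two_pi,
          integral_comp_sin_mul_cos_eq_zero
            (g := fun v => (r * v + u * v ^ 3) * (p + 3 * q * v ^ 2)) (by simp) (by fun_prop)]
        push_cast
        ring
    _ = 3 * π * a / 8 * (2 * r + u) := by ring

theorem stmt_13 (a bx by' θ : ℝ)
    (x y : ℝ → ℝ)
    (hx : x = fun α => a * Real.cos α ^ 3 + bx * Real.sin α -
        Real.cos θ * (bx * Real.cos θ - by' * Real.sin θ) * (Real.sin α - Real.sin α ^ 3))
    (hy : y = fun α => by' * Real.sin α ^ 3 +
        Real.cos θ * (bx * Real.sin θ + by' * Real.cos θ) * (Real.sin α - Real.sin α ^ 3)) :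
    (1 / 2) * ∫ α in (0:ℝ)..(2 * π), (x α * deriv y α - y α * deriv x α) =
      3 * π * a / 8 * (Real.cos θ * (bx * Real.sin θ + by' * Real.cos θ) + by') := by
  set C := Real.cos θ * (bx * Real.cos θ - by' * Real.sin θ)
  set D := Real.cos θ * (bx * Real.sin θ + by' * Real.cos θ)
  have hx' : x = fun t => a * cos t ^ 3 + (bx - C) * sin t + C * sin t ^ 3 := by
    rw [hx]; ext; ring
  have hy' : y = fun t => D * sin t + (by' - D) * sin t ^ 3 := by
    rw [hy]; ext; ring
  rw [hx', hy', area_cos_cube_loop]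
  ring
end

section
/- Let m, n be odd positive integers and Δα₁, Δα₂, Δα₃ real. The area S = (1/2)∮₀^{2π}[x y′ − y x′]dα of the loop x(α) = â cos^m(α+Δα₁) + b̂_x sin^n(α+Δα₂), y(α) = b_y sin(α+Δα₃) equals π b_y · [ (â cos(Δα₁−Δα₃)/2^m)(2m C(m−1,(m−1)/2) − ((m−1)/2) C(m+1,(m+1)/2)) + (b̂_x sin(Δα₂−Δα₃)/2^n)(2n C(n−1,(n−1)/2) − ((n−1)/2) C(n+1,(n+1)/2)) ]. -/
/-!
Integrating by parts over a period, `∮ y x' = -∮ x y'`, so the area is `∮ x y'`. Writing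
`cos (α + d) = cos (α + c) cos (d - c) - sin (α + c) sin (d - c)`, the odd power
`cos (α + c) ^ (2k+1)` turns into `cos (d - c) cos (α + c) ^ (2k+2)` plus a term
`cos ^ (2k+1) · sin` with a periodic antiderivative; the even-power integral over a period is
`2π · C(2k+2, k+1) / 4^(k+1)` by the Wallis reduction formula. The sine term reduces to the cosine
one through `sin t = cos (t - π/2)`, and the paper's bracket
`2m C(m-1, (m-1)/2) - (m-1)/2 · C(m+1, (m+1)/2)` is just `C(m+1, (m+1)/2)`.
-/

open Real intervalIntegral

theorem Function.Periodic.intervalIntegral_comp_add_right {E : Type*} [NormedAddCommGroup E]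
    [NormedSpace ℝ E] {f : ℝ → E} {T : ℝ} (hf : Periodic f T) (t c : ℝ) :
    ∫ x in t..t + T, f (x + c) = ∫ x in t..t + T, f x := by
  rw [integral_comp_add_right, add_right_comm, hf.intervalIntegral_add_eq (t + c) t]

open Function in
theorem integral_mul_deriv_sub_mul_deriv_of_periodic {f g : ℝ → ℝ} {T : ℝ}
    (hf : ContDiff ℝ 1 f) (hg : ContDiff ℝ 1 g) (hfT : Periodic f T) (hgT : Periodic g T)
    (a : ℝ) :
    ∫ t in a..a + T, (f t * deriv g t - g t * deriv f t) =
      2 * ∫ t in a..a + T, f t * deriv g t := by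
  have hf' := hf.continuous_deriv le_rfl
  have hg' := hg.continuous_deriv le_rfl
  -- integrating by parts, the boundary term vanishes by periodicity
  have parts : ∫ t in a..a + T, g t * deriv f t = -∫ t in a..a + T, f t * deriv g t := by
    rw [integral_mul_deriv_eq_deriv_mul
      (fun t _ => (hg.differentiable one_ne_zero t).hasDerivAt)
      (fun t _ => (hf.differentiable one_ne_zero t).hasDerivAt)
      (hg'.intervalIntegrable _ _) (hf'.intervalIntegrable _ _), hfT a, hgT a]
    simp only [sub_self, zero_sub, mul_comm (deriv g _)]
  rw [integral_sub (Continuous.intervalIntegrable (by fun_prop) _ _)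
    (Continuous.intervalIntegrable (by fun_prop) _ _), parts]
  ring

theorem integral_cos_pow_two_mul (k : ℕ) :
    ∫ x in (0:ℝ)..2 * π, cos x ^ (2 * k) = 2 * π * k.centralBinom / 4 ^ k := by
  induction k with
  | zero => simp
  | succ k ih =>
    have h := Nat.succ_mul_centralBinom_succ k
    rw [mul_add_one, integral_cos_pow, ih]
    simp only [sin_two_pi, sin_zero, mul_zero, sub_zero, zero_div, zero_add]
    rw [← Nat.cast_inj (R := ℝ)] at h
    push_cast at h ⊢
    field_simp
    linear_combination (-2 * 4 ^ k) * h

theorem integral_cos_pow_mul_sin (j : ℕ) :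
    ∫ x in (0:ℝ)..2 * π, cos x ^ j * sin x = 0 := by
  simpa [mul_comm (cos _ ^ j)] using integral_sin_pow_odd_mul_cos_pow (a := 0) (b := 2 * π) 0 j

theorem integral_cos_pow_mul_cos_add (k : ℕ) (e : ℝ) :
    ∫ x in (0:ℝ)..2 * π, cos x ^ (2 * k + 1) * cos (x + e) =
      cos e * (2 * π * (k + 1).centralBinom / 4 ^ (k + 1)) := by
  have expand (x : ℝ) : cos x ^ (2 * k + 1) * cos (x + e) =
      cos e * cos x ^ (2 * (k + 1)) - sin e * (cos x ^ (2 * k + 1) * sin x) := by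
    rw [cos_add]; ring
  simp_rw [expand]
  rw [integral_sub (Continuous.intervalIntegrable (by fun_prop) _ _)
    (Continuous.intervalIntegrable (by fun_prop) _ _), integral_const_mul, integral_const_mul,
    integral_cos_pow_two_mul, integral_cos_pow_mul_sin, mul_zero, sub_zero]

theorem integral_cos_add_pow_mul_cos_add {m : ℕ} (hm : Odd m) (c d : ℝ) :
    ∫ x in (0:ℝ)..2 * π, cos (x + c) ^ m * cos (x + d) =
      cos (c - d) * (2 * π * ((m + 1) / 2).centralBinom / 2 ^ (m + 1)) := by
  obtain ⟨k, rfl⟩ := hm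
  have hper : Function.Periodic (fun x => cos x ^ (2 * k + 1) * cos (x + (d - c))) (2 * π) :=
    fun x => by dsimp only; rw [add_right_comm, cos_add_two_pi, cos_add_two_pi]
  have hshift := hper.intervalIntegral_comp_add_right 0 c
  simp only [zero_add, add_add_sub_cancel] at hshift
  rw [hshift, integral_cos_pow_mul_cos_add, ← cos_neg, neg_sub,
    show (2 * k + 1 + 1) / 2 = k + 1 by omega, show 2 * k + 1 + 1 = 2 * (k + 1) by ring, pow_mul]
  norm_num

theorem integral_sin_add_pow_mul_cos_add {m : ℕ} (hm : Odd m) (c d : ℝ) :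
    ∫ x in (0:ℝ)..2 * π, sin (x + c) ^ m * cos (x + d) =
      sin (c - d) * (2 * π * ((m + 1) / 2).centralBinom / 2 ^ (m + 1)) := by
  have h := integral_cos_add_pow_mul_cos_add hm (c - π / 2) d
  simpa only [← add_sub_assoc, sub_right_comm c (π / 2) d, cos_sub_pi_div_two] using h

theorem two_mul_mul_choose_sub_mul_choose_of_odd {m : ℕ} (hm : Odd m) :
    2 * (m : ℝ) * (m - 1).choose ((m - 1) / 2) -
        (((m - 1) / 2 : ℕ) : ℝ) * (m + 1).choose ((m + 1) / 2) = ((m + 1) / 2).centralBinom := by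
  obtain ⟨k, rfl⟩ := hm
  have h := Nat.succ_mul_centralBinom_succ k
  rw [show (2 * k + 1 + 1) / 2 = k + 1 by omega, show 2 * k + 1 + 1 = 2 * (k + 1) by ring,
    Nat.add_sub_cancel, Nat.mul_div_cancel_left k two_pos]
  simp only [← Nat.centralBinom_eq_two_mul_choose]
  rw [← Nat.cast_inj (R := ℝ)] at h
  push_cast at h ⊢
  linear_combination -h

theorem stmt_15_general (m n : ℕ) (hm : Odd m) (hn : Odd n)
    (ahat bxhat by' Δα₁ Δα₂ Δα₃ : ℝ)
    (x y : ℝ → ℝ)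
    (hx : x = fun α => ahat * Real.cos (α + Δα₁) ^ m + bxhat * Real.sin (α + Δα₂) ^ n)
    (hy : y = fun α => by' * Real.sin (α + Δα₃)) :
    (1 / 2) * ∫ α in (0:ℝ)..(2 * π), (x α * deriv y α - y α * deriv x α) =
      π * by' *
        ((ahat * Real.cos (Δα₁ - Δα₃) / 2 ^ m) *
            (2 * m * (Nat.choose (m - 1) ((m - 1) / 2) : ℝ) -
              ((m - 1 : ℕ) / 2 : ℕ) * (Nat.choose (m + 1) ((m + 1) / 2) : ℝ)) +
          (bxhat * Real.sin (Δα₂ - Δα₃) / 2 ^ n) *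
            (2 * n * (Nat.choose (n - 1) ((n - 1) / 2) : ℝ) -
              ((n - 1 : ℕ) / 2 : ℕ) * (Nat.choose (n + 1) ((n + 1) / 2) : ℝ))) := by
  have hxper : Function.Periodic x (2 * π) := fun α => by
    simp only [hx, add_right_comm α, cos_add_two_pi, sin_add_two_pi]
  have hyper : Function.Periodic y (2 * π) := fun α => by
    simp only [hy, add_right_comm α, sin_add_two_pi]
  have hy' : deriv y = fun α => by' * cos (α + Δα₃) := by
    rw [hy]; funext α; simp
  have area := integral_mul_deriv_sub_mul_deriv_of_periodic (by rw [hx]; fun_prop)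
    (by rw [hy]; fun_prop) hxper hyper 0
  rw [zero_add] at area
  have expand (α : ℝ) : x α * deriv y α = ahat * by' * (cos (α + Δα₁) ^ m * cos (α + Δα₃)) +
      bxhat * by' * (sin (α + Δα₂) ^ n * cos (α + Δα₃)) := by
    rw [hx, hy']; ring
  simp_rw [area, expand]
  rw [integral_add (Continuous.intervalIntegrable (by fun_prop) _ _)
    (Continuous.intervalIntegrable (by fun_prop) _ _), integral_const_mul, integral_const_mul,
    integral_cos_add_pow_mul_cos_add hm, integral_sin_add_pow_mul_cos_add hn,
    two_mul_mul_choose_sub_mul_choose_of_odd hm, two_mul_mul_choose_sub_mul_choose_of_odd hn,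
    pow_succ, pow_succ]
  field_simp

theorem stmt_15 (m n : ℕ) (hm : Odd m) (hmpos : 0 < m) (hn : Odd n) (hnpos : 0 < n)
    (ahat bxhat by' Δα₁ Δα₂ Δα₃ : ℝ)
    (x y : ℝ → ℝ)
    (hx : x = fun α => ahat * Real.cos (α + Δα₁) ^ m + bxhat * Real.sin (α + Δα₂) ^ n)
    (hy : y = fun α => by' * Real.sin (α + Δα₃)) :
    (1 / 2) * ∫ α in (0:ℝ)..(2 * π), (x α * deriv y α - y α * deriv x α) =
      π * by' *
        ((ahat * Real.cos (Δα₁ - Δα₃) / 2 ^ m) *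
            (2 * m * (Nat.choose (m - 1) ((m - 1) / 2) : ℝ) -
              ((m - 1 : ℕ) / 2 : ℕ) * (Nat.choose (m + 1) ((m + 1) / 2) : ℝ)) +
          (bxhat * Real.sin (Δα₂ - Δα₃) / 2 ^ n) *
            (2 * n * (Nat.choose (n - 1) ((n - 1) / 2) : ℝ) -
              ((n - 1 : ℕ) / 2 : ℕ) * (Nat.choose (n + 1) ((n + 1) / 2) : ℝ))) :=
  stmt_15_general m n hm hn ahat bxhat by' Δα₁ Δα₂ Δα₃ x y hx hy
end
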